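/- Let A be a C*-algebra, let B be a unital C*-algebra, let h ∈ B be invertible, and let r = h ((h* h)^{1/2})^{-1}, which is a unitary in B. Let S : A → B be a continuous surjective linear map which is a triple homomorphism (S({a,b,c}) = {S(a),S(b),S(c)} for all a,b,c ∈ A) and satisfies h* S(x) = S(x*)* h, h S(x*)* = S(x) h*, and h r* S(x) = S(x) r* h for all x ∈ A. Then the map T : A → B defined by T(x) = h r* S(x) = S(x) r* h is a surjective bounded linear operator which is orthogonality preserving. -/

import Mathlib

/-- Two elements `a, b` of a C*-algebra are orthogonal if `a b* = 0` and `b* a = 0`. -/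
def IsOrthogonal {A : Type*} [NonUnitalCStarAlgebra A] (a b : A) : Prop :=
  a * star b = 0 ∧ star b * a = 0

/-- The canonical triple product `{a,b,c} = (a b* c + c b* a) / 2` of a C*-algebra. -/
noncomputable def tripleProduct {A : Type*} [NonUnitalCStarAlgebra A] (a b c : A) : A :=
  (2 : ℂ)⁻¹ • (a * star b * c + c * star b * a)

/-!
If `a ⊥ b` then `{a, b, ·}` vanishes, so for `u = S a (S b)*` and `v = (S b)* S a` surjectivity
of `S` gives `u y + y v = 0` for every `y ∈ B`. Taking `y = 1` gives `v = -u`, so `u` is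
central; `{a, b, a} = 0` gives `u S a = 0`, hence `u² = 0`, and a central element of a
C*-algebra with square zero vanishes by the C*-identity. Finally `T = (h r*) S` with `h r*`
invertible, and the intertwining `h r* S x = S x r* h` lets orthogonality pass from `S` to `T`.
-/

lemma eq_zero_of_commute_star_of_mul_self_eq_zero {R : Type*} [NonUnitalNormedRing R]
    [StarRing R] [CStarRing R] {u : R} (hcomm : Commute (star u) u) (hu : u * u = 0) :
    u = 0 := by
  have hsq : star (star u * u) * (star u * u) = 0 :=
    calc star (star u * u) * (star u * u) = star u * (u * star u) * u := by
          simp only [star_mul, star_star, mul_assoc]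
      _ = star u * star u * (u * u) := by rw [← hcomm.eq]; simp only [mul_assoc]
      _ = 0 := by rw [hu, mul_zero]
  rwa [CStarRing.star_mul_self_eq_zero_iff, CStarRing.star_mul_self_eq_zero_iff] at hsq

section Orthogonality

variable {A : Type*} [NonUnitalCStarAlgebra A]

lemma tripleProduct_eq_zero_iff {a b c : A} :
    tripleProduct a b c = 0 ↔ a * star b * c + c * star b * a = 0 := by
  rw [tripleProduct, smul_eq_zero, or_iff_right (inv_ne_zero two_ne_zero)]

lemma IsOrthogonal.tripleProduct_eq_zero {a b : A} (hab : IsOrthogonal a b) (c : A) :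
    tripleProduct a b c = 0 := by
  rw [tripleProduct_eq_zero_iff, hab.1, mul_assoc c, hab.2, zero_mul, mul_zero, add_zero]

lemma IsOrthogonal.mul_left_of_mul_eq_mul_mul {a b p q : A} (hab : IsOrthogonal a b)
    (ha : p * a = a * q) (hb : p * b = b * q) : IsOrthogonal (p * a) (p * b) := by
  constructor
  · calc p * a * star (p * b) = p * (a * star b) * star p := by
          simp only [star_mul, mul_assoc]
      _ = 0 := by rw [hab.1, mul_zero, zero_mul]
  · calc star (p * b) * (p * a) = star q * (star b * a) * q := by
          rw [ha, hb]; simp only [star_mul, mul_assoc]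
      _ = 0 := by rw [hab.2, mul_zero, zero_mul]

end Orthogonality

lemma IsOrthogonal.map_of_surjective_of_map_tripleProduct {A B F : Type*}
    [NonUnitalCStarAlgebra A] [CStarAlgebra B] [FunLike F A B] [ZeroHomClass F A B]
    {S : F} (hSsurj : Function.Surjective S)
    (hS : ∀ a b c : A, S (tripleProduct a b c) = tripleProduct (S a) (S b) (S c))
    {a b : A} (hab : IsOrthogonal a b) : IsOrthogonal (S a) (S b) := by
  have hsum : ∀ c, S a * star (S b) * S c + S c * star (S b) * S a = 0 := fun c => by
    rw [← tripleProduct_eq_zero_iff, ← hS, hab.tripleProduct_eq_zero, map_zero]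
  set u := S a * star (S b)
  set v := star (S b) * S a
  have huv : ∀ y, u * y + y * v = 0 := fun y => by
    obtain ⟨c, rfl⟩ := hSsurj y
    simpa only [mul_assoc (S c)] using hsum c
  have hv : v = -u := by simpa using eq_neg_of_add_eq_zero_right (huv 1)
  have hcomm : ∀ y, Commute y u := fun y =>
    (sub_eq_zero.mp (by simpa [hv, sub_eq_add_neg] using huv y)).symm
  have huSa : u * S a = 0 := by
    have h2 := hsum a
    rw [← two_smul ℂ] at h2
    exact (smul_eq_zero.mp h2).resolve_left two_ne_zero
  have hu : u = 0 := by
    refine eq_zero_of_commute_star_of_mul_self_eq_zero (hcomm _) ?_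
    calc u * u = u * S a * star (S b) := by simp only [u, mul_assoc]
      _ = 0 := by rw [huSa, zero_mul]
  exact ⟨hu, hv.trans (by rw [hu, neg_zero])⟩

lemma IsUnit.isUnit_cfc_sqrt_star_mul_self {B : Type*} [CStarAlgebra B] {h : B}
    (hh : IsUnit h) : IsUnit (cfc Real.sqrt (star h * h)) := by
  refine (isUnit_cfc_iff Real.sqrt _).mpr fun x hx => (Real.sqrt_pos.mpr ?_).ne'
  have hx0 : x ≠ 0 := by
    rintro rfl
    exact spectrum.zero_notMem ℝ (hh.star.mul hh) hx
  exact (spectrum_star_mul_self_nonneg x hx).lt_of_ne' hx0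

theorem surjective_orthogonality_preserving_of_form_general {A B : Type*}
    [NonUnitalCStarAlgebra A] [CStarAlgebra B]
    (h : B) (hinv : IsUnit h)
    (r : B) (hr : r = h * Ring.inverse (cfc Real.sqrt (star h * h)))
    (S : A →L[ℂ] B) (hSsurj : Function.Surjective S)
    (hS : ∀ a b c : A, S (tripleProduct a b c) = tripleProduct (S a) (S b) (S c))
    (h3 : ∀ x : A, h * star r * S x = S x * star r * h) :
    Function.Surjective (fun x : A => h * star r * S x) ∧
      ∀ a b : A, IsOrthogonal a b →
        IsOrthogonal (h * star r * S a) (h * star r * S b) := by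
  have hr_unit : IsUnit r :=
    hr ▸ hinv.mul (isUnit_ringInverse.mpr hinv.isUnit_cfc_sqrt_star_mul_self)
  have hT_unit : IsUnit (h * star r) := hinv.mul hr_unit.star
  refine ⟨(IsUnit.isUnit_iff_mulLeft_bijective.mp hT_unit).surjective.comp hSsurj,
    fun a b hab => ?_⟩
  have hintertwine : ∀ x, h * star r * S x = S x * (star r * h) := fun x =>
    (h3 x).trans (mul_assoc _ _ _)
  exact (hab.map_of_surjective_of_map_tripleProduct hSsurj hS).mul_left_of_mul_eq_mul_mul
    (hintertwine a) (hintertwine b)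

/-- Let `h` be invertible in a unital C*-algebra `B`, let `r = h ((h* h)^{1/2})⁻¹` be the
unitary in the polar decomposition of `h`, and let `S : A → B` be a continuous surjective
triple homomorphism intertwined with `h` and `r` as stated.  Then `T x = h r* S x = S x r* h`
is a surjective bounded linear operator which is orthogonality preserving. -/
theorem surjective_orthogonality_preserving_of_form {A B : Type*}
    [NonUnitalCStarAlgebra A] [CStarAlgebra B]
    (h : B) (hinv : IsUnit h)
    (r : B) (hr : r = h * Ring.inverse (cfc Real.sqrt (star h * h)))
    (S : A →L[ℂ] B) (hSsurj : Function.Surjective S)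
    (hS : ∀ a b c : A, S (tripleProduct a b c) = tripleProduct (S a) (S b) (S c))
    (h1 : ∀ x : A, star h * S x = star (S (star x)) * h)
    (h2 : ∀ x : A, h * star (S (star x)) = S x * star h)
    (h3 : ∀ x : A, h * star r * S x = S x * star r * h) :
    Function.Surjective (fun x : A => h * star r * S x) ∧
      ∀ a b : A, IsOrthogonal a b →
        IsOrthogonal (h * star r * S a) (h * star r * S b) :=
  surjective_orthogonality_preserving_of_form_general h hinv r hr S hSsurj hS h3
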